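/- (Proposition: master symmetry) Let V : ℝ³ → ℝ³ be the vector field of the Lotka–Volterra type system, V(x,y,z) = (bxy+cxz, axy−by²+cyz, −axz+byz−cz²), and for k1 ∈ ℝ with k1 ≠ 0 and k2 ∈ ℝ let X(x,y,z) = (k1 x + k2 bxy + k2 cxz, k1 y + k2 axy − k2 by² + k2 cyz, k1 z − k2 axz + k2 byz − k2 cz²). Then the Lie bracket of vector fields satisfies [X, V] = k1 · V and [[X, V], V] = 0 (so X is a master symmetry wherever V does not vanish). -/

import Mathlib

/-! Write `X = k₁ • id + k₂ • V`. Since `V` is homogeneous quadratic, Euler's identity gives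
`DV(p) p = 2 V(p)`, so `[X, V] = k₁ (DV(p) p − V(p)) + k₂ [V, V] = k₁ V`; and `[k₁ V, V] = 0`. -/

/-- Lie bracket of vector fields on `ℝ³`:
`[X,Y](p) = (DY)(p)·X(p) − (DX)(p)·Y(p)`. -/
noncomputable def vfBracket (X Y : (Fin 3 → ℝ) → (Fin 3 → ℝ)) :
    (Fin 3 → ℝ) → (Fin 3 → ℝ) :=
  fun p => fderiv ℝ Y p (X p) - fderiv ℝ X p (Y p)

theorem fderiv_apply_self_of_homogeneous {𝕜 E F : Type*} [NontriviallyNormedField 𝕜]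
    [NormedAddCommGroup E] [NormedSpace 𝕜 E] [NormedAddCommGroup F] [NormedSpace 𝕜 F]
    {f : E → F} {p : E} (n : ℕ) (hf : DifferentiableAt 𝕜 f p)
    (hom : ∀ t : 𝕜, f (t • p) = t ^ n • f p) :
    fderiv 𝕜 f p p = (n : 𝕜) • f p := by
  have hray : HasDerivAt (fun t : 𝕜 => f (t • p)) (fderiv 𝕜 f p p) 1 := by
    have hline : HasDerivAt (fun t : 𝕜 => t • p) p 1 := by
      simpa using (hasDerivAt_id (1 : 𝕜)).smul_const p
    exact HasFDerivAt.comp_hasDerivAt (x := 1) (by rw [one_smul]; exact hf.hasFDerivAt) hline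
  have hpow : HasDerivAt (fun t : 𝕜 => f (t • p)) ((n : 𝕜) • f p) 1 := by
    simpa [hom] using (hasDerivAt_pow n (1 : 𝕜)).smul_const (f p)
  exact hray.unique hpow

theorem vfBracket_smul_id_add_smul_left {V : (Fin 3 → ℝ) → (Fin 3 → ℝ)} {p : Fin 3 → ℝ}
    (hV : DifferentiableAt ℝ V p) (k₁ k₂ : ℝ) :
    vfBracket (fun q => k₁ • q + k₂ • V q) V p = k₁ • (fderiv ℝ V p p - V p) := by
  have hX : fderiv ℝ (fun q => k₁ • q + k₂ • V q) p
      = k₁ • ContinuousLinearMap.id ℝ _ + k₂ • fderiv ℝ V p := by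
    rw [fderiv_fun_add (by fun_prop : DifferentiableAt ℝ (fun q : Fin 3 → ℝ => k₁ • q) p)
      (hV.fun_const_smul k₂),
      fderiv_fun_const_smul differentiableAt_fun_id k₁, fderiv_fun_const_smul hV k₂, fderiv_fun_id]
  simp only [vfBracket, hX, add_apply, smul_apply,
    ContinuousLinearMap.id_apply, map_add, map_smul]
  module

theorem vfBracket_smul_self_left {V : (Fin 3 → ℝ) → (Fin 3 → ℝ)} {p : Fin 3 → ℝ}
    (hV : DifferentiableAt ℝ V p) (k : ℝ) :
    vfBracket (fun q => k • V q) V p = 0 := by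
  simp [vfBracket, fderiv_fun_const_smul hV k]

def lotkaVolterra (a b c : ℝ) (p : Fin 3 → ℝ) : Fin 3 → ℝ :=
  ![b * p 0 * p 1 + c * p 0 * p 2,
    a * p 0 * p 1 - b * (p 1)^2 + c * p 1 * p 2,
    -(a * p 0 * p 2) + b * p 1 * p 2 - c * (p 2)^2]

theorem differentiable_lotkaVolterra (a b c : ℝ) : Differentiable ℝ (lotkaVolterra a b c) := by
  intro p
  unfold lotkaVolterra
  rw [differentiableAt_pi]
  intro i
  fin_cases i <;> simp <;> fun_prop

theorem lotkaVolterra_smul (a b c t : ℝ) (p : Fin 3 → ℝ) :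
    lotkaVolterra a b c (t • p) = t ^ 2 • lotkaVolterra a b c p := by
  funext i
  fin_cases i <;> simp [lotkaVolterra] <;> ring

theorem X_master_symmetry_general (a b c k₁ k₂ : ℝ)
    (V X : (Fin 3 → ℝ) → (Fin 3 → ℝ))
    (hV : ∀ p, V p = ![b * p 0 * p 1 + c * p 0 * p 2,
                       a * p 0 * p 1 - b * (p 1)^2 + c * p 1 * p 2,
                       -(a * p 0 * p 2) + b * p 1 * p 2 - c * (p 2)^2])
    (hX : ∀ p, X p = ![k₁ * p 0 + k₂ * b * p 0 * p 1 + k₂ * c * p 0 * p 2,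
                       k₁ * p 1 + k₂ * a * p 0 * p 1 - k₂ * b * (p 1)^2 + k₂ * c * p 1 * p 2,
                       k₁ * p 2 - k₂ * a * p 0 * p 2 + k₂ * b * p 1 * p 2 - k₂ * c * (p 2)^2]) :
    (∀ p, vfBracket X V p = k₁ • V p)
    ∧ (∀ p, vfBracket (vfBracket X V) V p = 0) := by
  obtain rfl : V = lotkaVolterra a b c := funext hV
  obtain rfl : X = fun p => k₁ • p + k₂ • lotkaVolterra a b c p := by
    funext p i
    fin_cases i <;> simp [hX, lotkaVolterra] <;> ring
  have hdV := differentiable_lotkaVolterra a b c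
  have hbracket : ∀ p, vfBracket (fun q => k₁ • q + k₂ • lotkaVolterra a b c q)
      (lotkaVolterra a b c) p = k₁ • lotkaVolterra a b c p := by
    intro p
    rw [vfBracket_smul_id_add_smul_left (hdV p),
      fderiv_apply_self_of_homogeneous 2 (hdV p) (lotkaVolterra_smul a b c · p)]
    module
  refine ⟨hbracket, fun p => ?_⟩
  rw [funext hbracket]
  exact vfBracket_smul_self_left (hdV p) k₁

/-- Proposition (master symmetry): with `V` the Lotka–Volterra vector field and
`X = k₁·(x,y,z) + k₂·V`, one has `[X,V] = k₁·V` and `[[X,V],V] = 0`. -/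
theorem X_master_symmetry (a b c k₁ k₂ : ℝ) (ha : a ≠ 0) (hc : c ≠ 0) (hk₁ : k₁ ≠ 0)
    (V X : (Fin 3 → ℝ) → (Fin 3 → ℝ))
    (hV : ∀ p, V p = ![b * p 0 * p 1 + c * p 0 * p 2,
                       a * p 0 * p 1 - b * (p 1)^2 + c * p 1 * p 2,
                       -(a * p 0 * p 2) + b * p 1 * p 2 - c * (p 2)^2])
    (hX : ∀ p, X p = ![k₁ * p 0 + k₂ * b * p 0 * p 1 + k₂ * c * p 0 * p 2,
                       k₁ * p 1 + k₂ * a * p 0 * p 1 - k₂ * b * (p 1)^2 + k₂ * c * p 1 * p 2,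
                       k₁ * p 2 - k₂ * a * p 0 * p 2 + k₂ * b * p 1 * p 2 - k₂ * c * (p 2)^2]) :
    (∀ p, vfBracket X V p = k₁ • V p)
    ∧ (∀ p, vfBracket (vfBracket X V) V p = 0) :=
  X_master_symmetry_general a b c k₁ k₂ V X hV hX
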